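/- The multiplication μ of the subdistribution monad is not nonexpansive with respect to the Lévy-Prokhorov lifting: there exist a two-point metric space {⊥,•} with d(⊥,•)=1, subdistributions a, b, c on it, and distributions φ = 1_a and ψ = (1−ε)1_b + ε 1_c over subdistributions (for 0 < ε < 1), such that δ_LP(μφ, μψ) ≥ ε(2−ε) > ε = δ_LP^{δ_LP}(φ, ψ). Concretely, with a = 1_⊥, b = (1−ε)1_⊥ + ε 1_•, c = 1_•: δ_LP^d(a,b) = ε, δ_LP^{δ_LP^d}(φ,ψ) = ε, μφ = a, μψ = (1−ε)² 1_⊥ + (2−ε)ε 1_•, and δ_LP^d(μφ, μψ) ≥ ε(2−ε). -/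

import Mathlib

open scoped ENNReal Classical

noncomputable section

def mass {S : Type*} (φ : S → ℝ≥0∞) (X : Set S) : ℝ≥0∞ := ∑' x : X, φ x

def IsSubdist {S : Type*} (φ : S → ℝ≥0∞) : Prop := mass φ Set.univ ≤ 1

def IsPseudometric {S : Type*} (d : S → S → ℝ≥0∞) : Prop :=
  (∀ x, d x x = 0) ∧ (∀ x y, d x y = d y x) ∧ (∀ x y z, d x z ≤ d x y + d y z)

def Bounded1 {S : Type*} (d : S → S → ℝ≥0∞) : Prop := ∀ x y, d x y ≤ 1

def eball {S : Type*} (d : S → S → ℝ≥0∞) (X : Set S) (ε : ℝ≥0∞) : Set S :=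
  {y | ∃ x ∈ X, d x y < ε}

def LP {S : Type*} (d : S → S → ℝ≥0∞) (μ ν : S → ℝ≥0∞) : ℝ≥0∞ :=
  sInf {ε | ∀ X : Set S,
    mass μ X ≤ mass ν (eball d X ε) + ε ∧ mass ν X ≤ mass μ (eball d X ε) + ε}

def dirac {S : Type*} (x : S) : S → ℝ≥0∞ := fun y => if y = x then 1 else 0

def mult {S : Type*} (Φ : (S → ℝ≥0∞) → ℝ≥0∞) : S → ℝ≥0∞ :=
  fun x => ∑' φ : S → ℝ≥0∞, Φ φ * φ x

/-- The two-point metric space `{⊥, •}` represented as `Bool` (`false = ⊥`, `true = •`). -/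
def d2 : Bool → Bool → ℝ≥0∞ := fun x y => if x = y then 0 else 1

def aDist : Bool → ℝ≥0∞ := dirac false

def bDist (ε : ℝ≥0∞) : Bool → ℝ≥0∞ := fun x => if x = true then ε else 1 - ε

def cDist : Bool → ℝ≥0∞ := dirac true

def phiDist : (Bool → ℝ≥0∞) → ℝ≥0∞ := dirac aDist

def psiDist (ε : ℝ≥0∞) : (Bool → ℝ≥0∞) → ℝ≥0∞ :=
  fun ρ => if ρ = bDist ε then 1 - ε else if ρ = cDist then ε else 0

/-!
Lower bounds on `LP d μ ν` come from a single point `x`: if `ν` charges no point `y ≠ x` with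
`d x y < t`, the test set `{x}` forces `LP d μ ν ≥ t` as soon as `ν x + t ≤ μ x`. Upper bounds
against a Dirac mass: `LP d (dirac x) ν ≤ t` once `ν` puts mass at least `1 - t` within distance
`t` of `x`. Here `ψ` moves mass `1 - ε` to `b`, at distance `ε` from `a`, so `ψ` is `ε`-close
to `φ = 1_a`; but `μψ` puts mass `(2 - ε) ε` on `•`, at distance `1` from `μφ = 1_⊥`, which is
more than `ε`.
-/

section LevyProkhorov

variable {S : Type*}

lemma le_mass_of_mem (φ : S → ℝ≥0∞) {X : Set S} {x : S} (hx : x ∈ X) : φ x ≤ mass φ X :=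
  ENNReal.le_tsum (⟨x, hx⟩ : X)

lemma mass_mono (φ : S → ℝ≥0∞) {X Y : Set S} (h : X ⊆ Y) : mass φ X ≤ mass φ Y :=
  ENNReal.tsum_mono_subtype φ h

lemma mass_singleton (φ : S → ℝ≥0∞) (x : S) : mass φ {x} = φ x := tsum_singleton x φ

lemma mass_univ (φ : S → ℝ≥0∞) : mass φ Set.univ = ∑' x, φ x := tsum_univ φ

lemma mass_add_mass_le_univ (φ : S → ℝ≥0∞) {X Y : Set S} (h : Disjoint X Y) :
    mass φ X + mass φ Y ≤ mass φ Set.univ := by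
  rw [mass, mass, ← ENNReal.summable.tsum_union_disjoint h ENNReal.summable]
  exact mass_mono φ (Set.subset_univ _)

lemma mass_le_of_forall_ne {φ : S → ℝ≥0∞} {X : Set S} {x : S}
    (h : ∀ y ∈ X, y ≠ x → φ y = 0) : mass φ X ≤ φ x := by
  rw [mass, tsum_subtype, tsum_eq_single x fun y hyx => ?_]
  · exact Set.indicator_le_self X φ x
  · by_cases hy : y ∈ X
    · simp [hy, h y hy hyx]
    · simp [hy]

lemma mass_dirac (x : S) (X : Set S) : mass (dirac x) X = if x ∈ X then 1 else 0 := by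
  rw [mass, tsum_subtype, tsum_eq_single x fun y hy => by simp [dirac, hy]]
  simp [dirac, Set.indicator_apply]

lemma tsum_dirac_mul (x : S) (f : S → ℝ≥0∞) : ∑' y, dirac x y * f y = f x := by
  rw [tsum_eq_single x fun y hy => by simp [dirac, hy]]
  simp [dirac]

lemma LP_comm (d : S → S → ℝ≥0∞) (μ ν : S → ℝ≥0∞) : LP d μ ν = LP d ν μ := by
  simp only [LP, and_comm]

variable {d : S → S → ℝ≥0∞} {μ ν : S → ℝ≥0∞}

lemma le_LP_of_forall_ne {x : S} {t : ℝ≥0∞} (hνx : ν x ≠ ⊤)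
    (hd : ∀ y ≠ x, ν y ≠ 0 → t ≤ d x y) (h : ν x + t ≤ μ x) : t ≤ LP d μ ν := by
  refine le_sInf fun r hr => le_of_not_gt fun hrt => ?_
  have hball : mass ν (eball d {x} r) ≤ ν x := by
    refine mass_le_of_forall_ne fun y ⟨x', hx', hy⟩ hyx => ?_
    rw [Set.mem_singleton_iff.1 hx'] at hy
    exact not_not.1 fun hν => (hd y hyx hν).not_gt (hy.trans hrt)
  have hmass := (hr {x}).1
  rw [mass_singleton] at hmass
  exact (hmass.trans (by gcongr)).not_gt
    ((ENNReal.add_lt_add_left hνx hrt).trans_le h)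

lemma LP_dirac_le {x : S} {t : ℝ≥0∞} (hd : ∀ x y, d x y = d y x) (hν : IsSubdist ν)
    (h : 1 ≤ mass ν {y | d x y ≤ t} + t) : LP d (dirac x) ν ≤ t := by
  set B := {y | d x y ≤ t}
  refine le_of_forall_gt_imp_ge_of_dense fun r htr => sInf_le fun X => ⟨?_, ?_⟩
  · rw [mass_dirac]
    split_ifs with hx
    · calc 1 ≤ mass ν B + t := h
        _ ≤ mass ν (eball d X r) + r :=
          add_le_add (mass_mono ν fun y hy => ⟨x, hx, lt_of_le_of_lt hy htr⟩) htr.le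
    · exact zero_le
  · by_cases hx : x ∈ eball d X r
    · calc mass ν X ≤ 1 := (mass_mono ν (Set.subset_univ X)).trans hν
        _ = dirac x x := by simp [dirac]
        _ ≤ mass (dirac x) (eball d X r) + r := le_add_right (le_mass_of_mem _ hx)
    · have hdisj : Disjoint X B := Set.disjoint_left.2 fun y hy hyB =>
        hx ⟨y, hy, (hd y x).trans_lt (lt_of_le_of_lt hyB htr)⟩
      have hB : mass ν B ≠ ⊤ :=
        ne_top_of_le_ne_top ENNReal.one_ne_top ((mass_mono ν (Set.subset_univ B)).trans hν)
      have hX : mass ν B + mass ν X ≤ mass ν B + t := by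
        rw [add_comm]
        exact (mass_add_mass_le_univ ν hdisj).trans (hν.trans h)
      exact ((ENNReal.add_le_add_iff_left hB).1 hX).trans (htr.le.trans le_add_self)

end LevyProkhorov

lemma mul_two_sub_eq {ε : ℝ≥0∞} (h : ε ≤ 1) : ε * (2 - ε) = ε + ε * (1 - ε) := by
  have hε : ε ≠ ⊤ := ne_top_of_le_ne_top ENNReal.one_ne_top h
  rw [← one_add_one_eq_two, ← ENNReal.sub_add_eq_add_sub h hε, mul_add, mul_one, add_comm]

lemma mul_two_sub_le_one {ε : ℝ≥0∞} (h : ε ≤ 1) : ε * (2 - ε) ≤ 1 := by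
  rw [mul_two_sub_eq h]
  calc ε + ε * (1 - ε) ≤ ε + (1 - ε) := by gcongr; exact mul_le_of_le_one_left' h
    _ = 1 := add_tsub_cancel_of_le h

lemma lt_mul_two_sub {ε : ℝ≥0∞} (h0 : 0 < ε) (h1 : ε < 1) : ε < ε * (2 - ε) := by
  rw [mul_two_sub_eq h1.le]
  exact ENNReal.lt_add_right (h1.trans ENNReal.one_lt_top).ne
    (mul_ne_zero h0.ne' (tsub_pos_of_lt h1).ne')

lemma d2_comm (x y : Bool) : d2 x y = d2 y x := by
  simp only [d2, eq_comm]

lemma d2_of_ne {x y : Bool} (h : y ≠ x) : d2 x y = 1 := if_neg h.symm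

lemma bDist_ne_cDist {ε : ℝ≥0∞} (h1 : ε < 1) : bDist ε ≠ cDist := fun h => by
  simpa [bDist, cDist, dirac, tsub_eq_zero_iff_le, not_le.2 h1] using congrFun h false

lemma isSubdist_bDist {ε : ℝ≥0∞} (h1 : ε ≤ 1) : IsSubdist (bDist ε) := by
  rw [IsSubdist, mass_univ, tsum_fintype, Fintype.sum_bool]
  simp [bDist, add_tsub_cancel_of_le h1]

lemma psiDist_eq {ε : ℝ≥0∞} (h1 : ε < 1) :
    psiDist ε = fun ρ => (1 - ε) * dirac (bDist ε) ρ + ε * dirac cDist ρ := by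
  funext ρ
  by_cases hb : ρ = bDist ε
  · simp [psiDist, dirac, hb, bDist_ne_cDist h1]
  · by_cases hc : ρ = cDist <;> simp [psiDist, dirac, hb, hc, (bDist_ne_cDist h1).symm]

lemma tsum_psiDist_mul {ε : ℝ≥0∞} (h1 : ε < 1) (f : (Bool → ℝ≥0∞) → ℝ≥0∞) :
    ∑' ρ, psiDist ε ρ * f ρ = (1 - ε) * f (bDist ε) + ε * f cDist := by
  simp only [psiDist_eq h1, add_mul, mul_assoc, ENNReal.tsum_add, ENNReal.tsum_mul_left,
    tsum_dirac_mul]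

lemma isSubdist_psiDist {ε : ℝ≥0∞} (h1 : ε < 1) : IsSubdist (psiDist ε) := by
  rw [IsSubdist, mass_univ]
  simpa [tsub_add_cancel_of_le h1.le] using (tsum_psiDist_mul h1 1).le

lemma LP_d2_aDist_bDist {ε : ℝ≥0∞} (h1 : ε ≤ 1) : LP d2 aDist (bDist ε) = ε := by
  refine le_antisymm (LP_dirac_le d2_comm (isSubdist_bDist h1) ?_)
    (le_LP_of_forall_ne (x := false) ?_ ?_ ?_)
  · calc 1 ≤ bDist ε false + ε := le_tsub_add
      _ ≤ mass (bDist ε) {y | d2 false y ≤ ε} + ε := by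
        gcongr; exact le_mass_of_mem _ (by simp [d2])
  · simp [bDist]
  · intro y hy _
    rw [d2_of_ne hy]; exact h1
  · simp [bDist, aDist, dirac, tsub_add_cancel_of_le h1]

lemma one_le_LP_d2_aDist_cDist : 1 ≤ LP d2 aDist cDist :=
  le_LP_of_forall_ne (x := false) (by simp [cDist, dirac]) (fun y hy _ => (d2_of_ne hy).ge)
    (by simp [aDist, cDist, dirac])

lemma aDist_ne_bDist {ε : ℝ≥0∞} (h0 : 0 < ε) : aDist ≠ bDist ε := fun h =>
  h0.ne (by simpa [aDist, bDist, dirac] using congrFun h true)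

lemma aDist_ne_cDist : aDist ≠ cDist := fun h => by
  simpa [aDist, cDist, dirac] using congrFun h false

lemma psiDist_aDist {ε : ℝ≥0∞} (h0 : 0 < ε) : psiDist ε aDist = 0 := by
  simp [psiDist, aDist_ne_bDist h0, aDist_ne_cDist]

lemma LP_LP_phiDist_psiDist {ε : ℝ≥0∞} (h0 : 0 < ε) (h1 : ε < 1) :
    LP (LP d2) phiDist (psiDist ε) = ε := by
  refine le_antisymm (LP_dirac_le (LP_comm d2) (isSubdist_psiDist h1) ?_)
    (le_LP_of_forall_ne (x := aDist) ?_ ?_ ?_)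
  · calc 1 ≤ psiDist ε (bDist ε) + ε := by simpa [psiDist] using le_tsub_add
      _ ≤ mass (psiDist ε) {ρ | LP d2 aDist ρ ≤ ε} + ε := by
        gcongr; exact le_mass_of_mem _ (LP_d2_aDist_bDist h1.le).le
  · simp [psiDist_aDist h0]
  · intro ρ _ hρ
    by_cases hb : ρ = bDist ε
    · exact hb ▸ (LP_d2_aDist_bDist h1.le).ge
    · have hc : ρ = cDist := not_not.1 fun hc => hρ (by simp [psiDist, hb, hc])
      exact hc ▸ h1.le.trans one_le_LP_d2_aDist_cDist
  · simpa [psiDist_aDist h0, phiDist, dirac] using h1.le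

lemma mult_phiDist : mult phiDist = aDist :=
  funext fun x => tsum_dirac_mul aDist fun ρ => ρ x

lemma mult_psiDist {ε : ℝ≥0∞} (h1 : ε < 1) :
    mult (psiDist ε) = fun x : Bool => if x = true then (2 - ε) * ε else (1 - ε) * (1 - ε) := by
  funext x
  rw [mult, tsum_psiDist_mul h1 fun ρ => ρ x, mul_comm (2 - ε), mul_two_sub_eq h1.le]
  cases x <;> simp [bDist, cDist, dirac, add_comm, mul_comm]

lemma mul_two_sub_le_LP_mult {ε : ℝ≥0∞} (h1 : ε < 1) :
    ε * (2 - ε) ≤ LP d2 (mult phiDist) (mult (psiDist ε)) := by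
  rw [LP_comm, mult_phiDist, mult_psiDist h1]
  refine le_LP_of_forall_ne (x := true) (by simp [aDist, dirac]) (fun y hy _ => ?_) ?_
  · rw [d2_of_ne hy]; exact mul_two_sub_le_one h1.le
  · simp [aDist, dirac, mul_comm]

theorem stmt17 (ε : ℝ≥0∞) (h0 : 0 < ε) (h1 : ε < 1) :
    LP d2 aDist (bDist ε) = ε ∧
    LP (LP d2) phiDist (psiDist ε) = ε ∧
    mult phiDist = aDist ∧
    mult (psiDist ε) =
      (fun x : Bool => if x = true then (2 - ε) * ε else (1 - ε) * (1 - ε)) ∧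
    ε * (2 - ε) ≤ LP d2 (mult phiDist) (mult (psiDist ε)) ∧
    LP (LP d2) phiDist (psiDist ε) < LP d2 (mult phiDist) (mult (psiDist ε)) := by
  refine ⟨LP_d2_aDist_bDist h1.le, LP_LP_phiDist_psiDist h0 h1, mult_phiDist, mult_psiDist h1,
    mul_two_sub_le_LP_mult h1, ?_⟩
  rw [LP_LP_phiDist_psiDist h0 h1]
  exact (lt_mul_two_sub h0 h1).trans_le (mul_two_sub_le_LP_mult h1)

end
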